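/- arXiv:1807.04747 — 4 statements merged into one kernel-verified Lean document; each statement's English description precedes it below -/
import Mathlib

section
/- For any words $u, v$ in the free noncommutative algebra $\mathbb{Q}\langle e_0, e_1\rangle$ and any $a \in \{0,1\}$, the element $(u \shuffle v)e_a - u e_a \epsilon(v)$ lies in the subspace $\mathfrak{h} \shuffle \mathfrak{h}$ spanned by all shuffle products $w_1 \shuffle w_2$ with $w_1, w_2 \in \mathfrak{h}$, where $\mathfrak{h} = e_0\mathbb{Q}\langle e_0,e_1\rangle \oplus e_1\mathbb{Q}\langle e_0,e_1\rangle$ and $\epsilon$ is the anti-automorphism sending $e_a \mapsto -e_a$. -/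
open Finsupp

/-- Words in the letters `e₀, e₁`. -/
abbrev Word := List (Fin 2)

/-- The free noncommutative algebra `ℚ⟨e₀,e₁⟩`, as finitely supported functions on words. -/
abbrev QA := Word →₀ ℚ

/-- Concatenation product on `ℚ⟨e₀,e₁⟩`. -/
noncomputable def conc (x y : QA) : QA :=
  x.sum fun u a => y.sum fun v b => Finsupp.single (u ++ v) (a * b)

/-- Shuffle product of two words. -/
noncomputable def sw : Word → Word → QA
  | [], v => Finsupp.single v 1
  | u :: us, [] => Finsupp.single (u :: us) 1
  | a :: u, b :: v =>
      Finsupp.mapDomain (a :: ·) (sw u (b :: v)) +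
      Finsupp.mapDomain (b :: ·) (sw (a :: u) v)
termination_by u v => u.length + v.length

/-- Shuffle product on `ℚ⟨e₀,e₁⟩`, extended bilinearly. -/
noncomputable def shuffle (x y : QA) : QA :=
  x.sum fun u a => y.sum fun v b => (a * b) • sw u v

/-- The anti-automorphism `ε` with `ε(e_a) = -e_a`. -/
noncomputable def eps (x : QA) : QA :=
  x.sum fun u a => Finsupp.single u.reverse ((-1 : ℚ) ^ u.length * a)

/-- `𝔥 = e₀ℚ⟨e₀,e₁⟩ ⊕ e₁ℚ⟨e₀,e₁⟩`: elements with vanishing constant term. -/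
noncomputable def hh : Submodule ℚ QA where
  carrier := {x | x [] = 0}
  add_mem' := by intro a b ha hb; simp_all [Finsupp.add_apply]
  zero_mem' := by simp
  smul_mem' := by intro c x hx; simp_all [Finsupp.smul_apply]

/-
The right-hand recursion `(u e_a) ⧢ (v e_b) = (u ⧢ v e_b) e_a + (u e_a ⧢ v) e_b` has its left side in
`𝔥 ⧢ 𝔥`, so modulo `𝔥 ⧢ 𝔥` we get `(u ⧢ v e_b) e_a ≡ -(u e_a ⧢ v) e_b`. Iterating moves the letters of `v`
one at a time, last letter first and with a sign each, behind `u e_a`; what is left is `u e_a ε(v)`.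
-/

-- `conc` is the product of the monoid algebra of the free monoid; its ring laws are transported from there.
abbrev FreeAlg := MonoidAlgebra ℚ (FreeMonoid (Fin 2))

noncomputable def toFreeAlg (x : QA) : FreeAlg := MonoidAlgebra.ofCoeff x

theorem conc_eq_coeff_mul (x y : QA) : conc x y = (toFreeAlg x * toFreeAlg y).coeff := by
  rw [MonoidAlgebra.mul_def]
  simp only [MonoidAlgebra.coeff_finsuppSum, MonoidAlgebra.coeff_single]
  rfl

theorem conc_single_single (u v : Word) (c d : ℚ) :
    conc (single u c) (single v d) = single (u ++ v) (c * d) := by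
  rw [conc_eq_coeff_mul]
  exact congrArg MonoidAlgebra.coeff
    (MonoidAlgebra.single_mul_single (R := ℚ) (M := FreeMonoid (Fin 2)) u v c d)

theorem conc_add_left (x y z : QA) : conc (x + y) z = conc x z + conc y z := by
  simp only [conc_eq_coeff_mul]
  exact congrArg MonoidAlgebra.coeff (add_mul _ _ _)

theorem conc_add_right (x y z : QA) : conc x (y + z) = conc x y + conc x z := by
  simp only [conc_eq_coeff_mul]
  exact congrArg MonoidAlgebra.coeff (mul_add _ _ _)

theorem conc_assoc (x y z : QA) : conc (conc x y) z = conc x (conc y z) := by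
  rw [conc_eq_coeff_mul x y, conc_eq_coeff_mul y z]
  exact (conc_eq_coeff_mul _ _).trans <| (congrArg MonoidAlgebra.coeff
    (mul_assoc (toFreeAlg x) (toFreeAlg y) (toFreeAlg z))).trans (conc_eq_coeff_mul _ _).symm

theorem mapDomain_cons_eq_conc (c : Fin 2) (x : QA) :
    mapDomain (c :: ·) x = conc (single [c] 1) x := by
  rw [conc, sum_single_index (by simp)]
  simp [mapDomain]

theorem sw_nil_left (v : Word) : sw [] v = single v 1 := by
  simp [sw]

theorem sw_nil_right (u : Word) : sw u [] = single u 1 := by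
  cases u <;> simp [sw]

theorem sw_cons_cons (a b : Fin 2) (u v : Word) :
    sw (a :: u) (b :: v) =
      conc (single [a] 1) (sw u (b :: v)) + conc (single [b] 1) (sw (a :: u) v) := by
  rw [sw, mapDomain_cons_eq_conc, mapDomain_cons_eq_conc]

theorem sw_append_singleton (u v : Word) (a b : Fin 2) :
    sw (u ++ [a]) (v ++ [b]) =
      conc (sw u (v ++ [b])) (single [a] 1) + conc (sw (u ++ [a]) v) (single [b] 1) := by
  match u, v with
  | [], [] =>
    simp [sw_nil_left, sw_nil_right, sw_cons_cons, conc_single_single, add_comm]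
  | [], d :: v =>
    have ih := sw_append_singleton [] v a b
    simp only [List.cons_append, List.nil_append] at ih ⊢
    simp only [sw_cons_cons, sw_nil_left, ih, conc_add_right, conc_add_left, conc_assoc,
      conc_single_single, one_mul, List.cons_append, List.nil_append]
    abel
  | c :: u, [] =>
    have ih := sw_append_singleton u [] a b
    simp only [List.cons_append, List.nil_append] at ih ⊢
    simp only [sw_cons_cons, sw_nil_right, ih, conc_add_right, conc_add_left, conc_assoc,
      conc_single_single, one_mul, List.cons_append, List.nil_append]
    abel
  | c :: u, d :: v =>
    have ih₁ := sw_append_singleton u (d :: v) a b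
    have ih₂ := sw_append_singleton (c :: u) v a b
    simp only [List.cons_append] at ih₁ ih₂ ⊢
    simp only [sw_cons_cons, ih₁, ih₂, conc_add_right, conc_add_left, conc_assoc]
    abel
termination_by u.length + v.length

theorem single_mem_hh {w : Word} (hw : w ≠ []) (c : ℚ) : single w c ∈ hh := by
  show single w c [] = 0
  rw [single_apply, if_neg hw]

theorem shuffle_single_single (u v : Word) : shuffle (single u 1) (single v 1) = sw u v := by
  simp [shuffle]

theorem eps_single (v : Word) : eps (single v 1) = single v.reverse ((-1 : ℚ) ^ v.length) := by
  rw [eps, sum_single_index] <;> simp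

abbrev hhShuffles : Set QA := {z : QA | ∃ x y : QA, x ∈ hh ∧ y ∈ hh ∧ z = shuffle x y}

theorem sw_mem_span_hhShuffles {u v : Word} (hu : u ≠ []) (hv : v ≠ []) :
    sw u v ∈ Submodule.span ℚ hhShuffles :=
  Submodule.subset_span
    ⟨single u 1, single v 1, single_mem_hh hu 1, single_mem_hh hv 1,
      (shuffle_single_single u v).symm⟩

theorem conc_sw_single_sub_mem_span (v : Word) : ∀ (u : Word) (a : Fin 2),
    conc (sw u v) (single [a] 1) - single (u ++ [a] ++ v.reverse) ((-1 : ℚ) ^ v.length)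
      ∈ Submodule.span ℚ hhShuffles := by
  induction v using List.reverseRecOn with
  | nil =>
    intro u a
    simp [sw_nil_right, conc_single_single]
  | append_singleton v b ih =>
    intro u a
    have hsplit : conc (sw u (v ++ [b])) (single [a] 1)
          - single (u ++ [a] ++ (v ++ [b]).reverse) ((-1 : ℚ) ^ (v ++ [b]).length)
        = sw (u ++ [a]) (v ++ [b])
          - (conc (sw (u ++ [a]) v) (single [b] 1)
            - single (u ++ [a] ++ [b] ++ v.reverse) ((-1 : ℚ) ^ v.length)) := by
      rw [sw_append_singleton]
      simp only [List.reverse_append, List.reverse_singleton, List.length_append,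
        List.length_singleton, pow_succ, List.append_assoc, List.cons_append,
        List.nil_append, mul_neg_one, single_neg]
      abel
    rw [hsplit]
    exact sub_mem (sw_mem_span_hhShuffles (by simp) (by simp)) (ih (u ++ [a]) b)

/-- `(u ⧢ v)e_a - u e_a ε(v)` lies in the span of shuffle products of elements of `𝔥`. -/
theorem stmt0 (u v : Word) (a : Fin 2) :
    conc (sw u v) (Finsupp.single [a] 1)
      - conc (conc (Finsupp.single u 1) (Finsupp.single [a] 1)) (eps (Finsupp.single v 1))
    ∈ Submodule.span ℚ {z : QA | ∃ x y : QA, x ∈ hh ∧ y ∈ hh ∧ z = shuffle x y} := by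
  rw [eps_single, conc_single_single, conc_single_single, one_mul, one_mul]
  exact conc_sw_single_sub_mem_span v u a
end

section
/- The deconcatenation coproduct $\Delta(k_1,\dots,k_d) = \sum_{i=0}^{d} (k_1,\dots,k_i) \otimes (k_{i+1},\dots,k_d)$ is a ring homomorphism with respect to the harmonic product, i.e., $\Delta(\Bbbk * \Bbbk') = \Delta(\Bbbk) * \Delta(\Bbbk')$ where the product on $\mathbb{I} \otimes \mathbb{I}$ is componentwise harmonic product. Consequently $(\mathbb{I}, *, \Delta)$ is a commutative bialgebra. -/
open Finsupp

/-- The ℚ-vector space `𝕀` with basis all finite tuples of positive integers. -/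
abbrev II := List ℕ+ →₀ ℚ

/-- The harmonic (stuffle) product of two indices. -/
noncomputable def harW : List ℕ+ → List ℕ+ → II
  | [], v => Finsupp.single v 1
  | u :: us, [] => Finsupp.single (u :: us) 1
  | k :: ks, l :: ls =>
      Finsupp.mapDomain (k :: ·) (harW ks (l :: ls)) +
      Finsupp.mapDomain (l :: ·) (harW (k :: ks) ls) +
      Finsupp.mapDomain ((k + l) :: ·) (harW ks ls)
termination_by u v => u.length + v.length

/-- The harmonic product on `𝕀`, extended bilinearly. -/
noncomputable def har (x y : II) : II :=
  x.sum fun u a => y.sum fun v b => (a * b) • harW u v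

/-- The harmonic product as a bilinear map. -/
noncomputable def harL : II →ₗ[ℚ] II →ₗ[ℚ] II :=
  Finsupp.lsum ℚ fun u => LinearMap.toSpanSingleton ℚ (II →ₗ[ℚ] II)
    (Finsupp.lsum ℚ fun v => LinearMap.toSpanSingleton ℚ II (harW u v))

open TensorProduct in
/-- The deconcatenation coproduct `Δ` on `𝕀`. -/
noncomputable def delta : II →ₗ[ℚ] II ⊗[ℚ] II :=
  Finsupp.lsum ℚ fun k => LinearMap.toSpanSingleton ℚ (II ⊗[ℚ] II)
    (∑ i ∈ Finset.range (k.length + 1),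
      Finsupp.single (k.take i) (1 : ℚ) ⊗ₜ[ℚ] Finsupp.single (k.drop i) (1 : ℚ))

open TensorProduct in
/-- The componentwise harmonic product on `𝕀 ⊗ 𝕀`. -/
noncomputable def harT : (II ⊗[ℚ] II) →ₗ[ℚ] (II ⊗[ℚ] II) →ₗ[ℚ] (II ⊗[ℚ] II) :=
  TensorProduct.map₂ harL harL

/-!
Both sides of the homomorphism identity are bilinear, so it suffices to compare them on basis
words `u`, `v`, where `Δ(u * v)` is the sum over all pairs of cuts of `u` and `v` of
(product of the prefixes) ⊗ (product of the suffixes). This follows by induction on `|u| + |v|`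
from the recursion for `*`: the first letter of each word of `(k :: u') * (l :: v')` is `k`, `l`
or `k + l`, and a deconcatenation either cuts before that letter or cuts inside the product of the
remaining tails, where the induction hypothesis applies. Commutativity is the symmetry of the
same recursion.
-/

open TensorProduct

lemma harW_nil_left (v : List ℕ+) : harW [] v = single v 1 := by
  cases v <;> simp [harW]

lemma harW_nil_right (u : List ℕ+) : harW u [] = single u 1 := by
  cases u <;> simp [harW]

lemma harW_cons_cons (k l : ℕ+) (ks ls : List ℕ+) :
    harW (k :: ks) (l :: ls) =
      mapDomain (k :: ·) (harW ks (l :: ls)) + mapDomain (l :: ·) (harW (k :: ks) ls) +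
        mapDomain ((k + l) :: ·) (harW ks ls) := by
  rw [harW]

lemma harW_comm : ∀ u v : List ℕ+, harW u v = harW v u
  | [], v => by rw [harW_nil_left, harW_nil_right]
  | u :: us, [] => by rw [harW_nil_left, harW_nil_right]
  | k :: ks, l :: ls => by
      rw [harW_cons_cons, harW_cons_cons l k, harW_comm ks, harW_comm _ ls, harW_comm ks ls,
        add_comm k l]
      abel
termination_by u v => u.length + v.length

lemma harL_single (u v : List ℕ+) (a b : ℚ) :
    harL (single u a) (single v b) = (a * b) • harW u v := by
  simp [harL, mul_smul]

lemma harL_comm (x y : II) : harL x y = harL y x := by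
  suffices harL = harL.flip from LinearMap.congr_fun (LinearMap.congr_fun this x) y
  refine Finsupp.lhom_ext fun u a => Finsupp.lhom_ext fun v b => ?_
  rw [LinearMap.flip_apply, harL_single, harL_single, harW_comm, mul_comm]

lemma delta_single (w : List ℕ+) (c : ℚ) :
    delta (single w c) =
      c • ∑ i ∈ Finset.range (w.length + 1),
        single (w.take i) (1 : ℚ) ⊗ₜ[ℚ] single (w.drop i) 1 := by
  simp [delta]

lemma delta_mapDomain_cons (k : ℕ+) (x : II) :
    delta (mapDomain (k :: ·) x) =
      single [] 1 ⊗ₜ mapDomain (k :: ·) x +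
        map (lmapDomain ℚ ℚ (k :: ·)) LinearMap.id (delta x) := by
  induction x using Finsupp.induction_linear with
  | zero => simp
  | add f g hf hg =>
      rw [mapDomain_add, map_add, map_add, map_add, hf, hg, tmul_add, add_add_add_comm]
  | single w c =>
      simp only [mapDomain_single, delta_single, map_smul, map_sum, map_tmul, lmapDomain_apply,
        LinearMap.id_coe, id_eq, List.length_cons, Finset.sum_range_succ' _ (w.length + 1),
        List.take_succ_cons, List.drop_succ_cons, List.take_zero, List.drop_zero, smul_add,
        ← tmul_smul, smul_single_one]
      abel

lemma delta_harW : ∀ u v : List ℕ+,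
    delta (harW u v) =
      ∑ i ∈ Finset.range (u.length + 1), ∑ j ∈ Finset.range (v.length + 1),
        harW (u.take i) (v.take j) ⊗ₜ[ℚ] harW (u.drop i) (v.drop j)
  | [], v => by simp [harW_nil_left, delta_single]
  | u :: us, [] => by simp [harW_nil_right, delta_single]
  | k :: ks, l :: ls => by
      rw [harW_cons_cons, map_add, map_add, delta_mapDomain_cons, delta_mapDomain_cons,
        delta_mapDomain_cons, delta_harW ks (l :: ls), delta_harW (k :: ks) ls, delta_harW ks ls]
      simp only [List.length_cons, Finset.sum_range_succ' _ (ks.length + 1),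
        Finset.sum_range_succ' _ (ls.length + 1), map_sum, map_add, map_tmul, lmapDomain_apply,
        LinearMap.id_coe, id_eq, List.take_succ_cons, List.drop_succ_cons, List.take_zero,
        List.drop_zero, harW_nil_left, harW_nil_right, mapDomain_single, harW_cons_cons,
        add_tmul, tmul_add, Finset.sum_add_distrib]
      abel
termination_by u v => u.length + v.length

lemma delta_harL (x y : II) : delta (harL x y) = harT (delta x) (delta y) := by
  suffices harL.compr₂ delta = (harT ∘ₗ delta).compl₂ delta from
    LinearMap.congr_fun (LinearMap.congr_fun this x) y
  refine Finsupp.lhom_ext fun u a => Finsupp.lhom_ext fun v b => ?_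
  simp only [LinearMap.compr₂_apply, LinearMap.compl₂_apply, LinearMap.comp_apply, harL_single,
    map_smul, delta_harW, delta_single, LinearMap.smul_apply, harT, map₂_apply_tmul, map_tmul,
    map_sum, LinearMap.sum_apply, one_mul, one_smul, Finset.smul_sum, smul_smul]
  rw [Finset.sum_comm]
  simp only [mul_comm]

/-- The deconcatenation coproduct is a homomorphism for the harmonic product,
so `(𝕀, *, Δ)` is a commutative bialgebra. -/
theorem stmt4 :
    (∀ x y : II, delta (harL x y) = harT (delta x) (delta y)) ∧
    (∀ x y : II, harL x y = harL y x) :=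
  ⟨delta_harL, harL_comm⟩
end

section
/- Let $\mathcal{Z}$ be the $\mathbb{Q}$-subalgebra of $\mathbb{R}$ generated by all multiple zeta values, and suppose $x \in \mathcal{Z}[2\pi i] = \mathcal{Z} \oplus 2\pi i \mathcal{Z}$ (assuming this sum is direct since $\mathcal{Z} \subset \mathbb{R}$). Then the refined symmetric multiple zeta value $\zeta^{RS}(k_1,\dots,k_d)$, defined by the formula $\zeta^{RS}(k_1,\dots,k_d) = \sum_{\substack{0 \le a \le b \le d \\ k_j = 1 \text{ for all } a < j \le b}} \frac{(-2\pi i)^{b-a}}{(b-a+1)!}(-1)^{k_{b+1}+\cdots+k_d}\, \zeta_\shuffle(k_1,\dots,k_a)\, \zeta_\shuffle(k_d,\dots,k_{b+1})$, satisfies $\mathrm{Re}\,\zeta^{RS}(k_1,\dots,k_d) \equiv \sum_{i=0}^{d} (-1)^{k_{i+1}+\cdots+k_d}\zeta_\shuffle(k_1,\dots,k_i)\zeta_\shuffle(k_d,\dots,k_{i+1}) \pmod{\pi^2 \mathcal{Z}}$; that is, $\zeta^{RS}$ is a lift of the symmetric multiple zeta value $\zeta^S$. -/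
open Complex

/-- The refined symmetric multiple zeta value `ζ^{RS}(k₁,…,k_d)`, defined by the explicit
formula from the paper in terms of the shuffle-regularized values `zsh`:
`ζ^{RS}(𝕜) = ∑_{0≤a≤b≤d, k_j=1 for a<j≤b} ((-2πi)^{b-a}/(b-a+1)!) (-1)^{k_{b+1}+⋯+k_d}
ζ_⧢(k₁,…,k_a) ζ_⧢(k_d,…,k_{b+1})`. -/
noncomputable def zrs (zsh : List ℕ+ → ℝ) (k : List ℕ+) : ℂ :=
  ∑ a ∈ Finset.range (k.length + 1), ∑ b ∈ Finset.range (k.length + 1),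
    if a ≤ b ∧ (k.drop a).take (b - a) = List.replicate (b - a) 1 then
      (-(2 * (Real.pi : ℂ) * I)) ^ (b - a) / ((b - a + 1).factorial : ℂ) *
        (-1 : ℂ) ^ (((k.drop b).map fun x => (x : ℕ)).sum) *
        ((zsh (k.take a) : ℝ) : ℂ) * ((zsh ((k.drop b).reverse) : ℝ) : ℂ)
    else 0

/-!
Only the diagonal terms `a = b` of `ζ^{RS}` are free of powers of `2πi`, and they are exactly
the terms of `ζ^S`. An off-diagonal term is `(-2πi)^n` with `n ≥ 1` times a real element of `𝒵`:
for odd `n` it is purely imaginary, and for even `n` it is `(-4π²)^{n/2}` times an element of `𝒵`,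
hence lies in `π²𝒵`.
-/

namespace ZetaRS

variable (Z : Subalgebra ℚ ℝ)

noncomputable abbrev piSqMultiples : Submodule Z ℝ := Submodule.span Z {Real.pi ^ 2}

variable {Z}

theorem mem_piSqMultiples_iff {x : ℝ} : x ∈ piSqMultiples Z ↔ ∃ c ∈ Z, x = Real.pi ^ 2 * c := by
  rw [Submodule.mem_span_singleton]
  exact ⟨fun ⟨c, hc⟩ => ⟨c, c.2, by rw [← hc, mul_comm]; rfl⟩,
    fun ⟨c, hc, hx⟩ => ⟨⟨c, hc⟩, by rw [hx, mul_comm]; rfl⟩⟩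

theorem ratCast_mem (q : ℚ) : (q : ℝ) ∈ Z := by
  simpa using Z.algebraMap_mem q

theorem neg_two_pi_I_sq : (-(2 * (Real.pi : ℂ) * I)) ^ 2 = ofReal (-(4 * Real.pi ^ 2)) := by
  push_cast
  linear_combination (4 * (Real.pi : ℂ) ^ 2) * I_sq

theorem re_neg_two_pi_I_pow_mem (hpi : Real.pi ^ 2 ∈ Z) {n : ℕ} (hn : n ≠ 0) :
    ((-(2 * (Real.pi : ℂ) * I)) ^ n).re ∈ piSqMultiples Z := by
  obtain ⟨m, rfl | rfl⟩ := Nat.even_or_odd' n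
  · obtain ⟨m, rfl⟩ : ∃ m', m = m' + 1 := ⟨m - 1, by omega⟩
    rw [pow_mul, neg_two_pi_I_sq, ← ofReal_pow, ofReal_re, mem_piSqMultiples_iff]
    refine ⟨-4 * (-(4 * Real.pi ^ 2)) ^ m,
      mul_mem (by exact_mod_cast ratCast_mem (-4)) (pow_mem ?_ _), by ring⟩
    exact neg_mem (mul_mem (by exact_mod_cast ratCast_mem 4) hpi)
  · -- odd powers of `2πi` are purely imaginary
    have : -(2 * (Real.pi : ℂ) * I) = ofReal (-(2 * Real.pi)) * I := by push_cast; ring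
    rw [pow_succ, pow_mul, neg_two_pi_I_sq, ← ofReal_pow, this, ← mul_assoc, ← ofReal_mul,
      mul_I_re, ofReal_im, neg_zero]
    exact zero_mem _

variable (zsh : List ℕ+ → ℝ) (k : List ℕ+)

noncomputable def zrsTerm (a b : ℕ) : ℂ :=
  if a ≤ b ∧ (k.drop a).take (b - a) = List.replicate (b - a) 1 then
    (-(2 * (Real.pi : ℂ) * I)) ^ (b - a) / ((b - a + 1).factorial : ℂ) *
      (-1 : ℂ) ^ (((k.drop b).map fun x => (x : ℕ)).sum) *
      ((zsh (k.take a) : ℝ) : ℂ) * ((zsh ((k.drop b).reverse) : ℝ) : ℂ)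
  else 0

theorem zrs_eq_sum_zrsTerm :
    zrs zsh k = ∑ a ∈ Finset.range (k.length + 1), ∑ b ∈ Finset.range (k.length + 1),
      zrsTerm zsh k a b :=
  rfl

theorem zrsTerm_self (a : ℕ) :
    zrsTerm zsh k a a = ofReal ((-1 : ℝ) ^ (((k.drop a).map fun x => (x : ℕ)).sum) *
      zsh (k.take a) * zsh ((k.drop a).reverse)) := by
  simp [zrsTerm]

theorem re_zrs_sub_sum_zrsTerm_self :
    (zrs zsh k).re - ∑ i ∈ Finset.range (k.length + 1),
        (-1 : ℝ) ^ (((k.drop i).map fun x => (x : ℕ)).sum) *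
          zsh (k.take i) * zsh ((k.drop i).reverse) =
      ∑ a ∈ Finset.range (k.length + 1), ∑ b ∈ (Finset.range (k.length + 1)).erase a,
        (zrsTerm zsh k a b).re := by
  rw [zrs_eq_sum_zrsTerm, re_sum, sub_eq_iff_eq_add', ← Finset.sum_add_distrib]
  refine Finset.sum_congr rfl fun a ha => ?_
  rw [re_sum, ← Finset.add_sum_erase _ _ ha, zrsTerm_self, ofReal_re]

variable {zsh k}

theorem re_zrsTerm_mem (hpi : Real.pi ^ 2 ∈ Z) (hz : ∀ k, zsh k ∈ Z) {a b : ℕ} (hab : a ≠ b) :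
    (zrsTerm zsh k a b).re ∈ piSqMultiples Z := by
  unfold zrsTerm
  split_ifs with h
  · set s := ((k.drop b).map fun x => (x : ℕ)).sum
    set r : ℝ := ((b - a + 1).factorial : ℝ)⁻¹ * (-1) ^ s * zsh (k.take a) *
      zsh ((k.drop b).reverse)
    have hr : r ∈ Z := by
      refine mul_mem (mul_mem (mul_mem ?_ (pow_mem (neg_mem (one_mem Z)) _)) (hz _)) (hz _)
      simpa using ratCast_mem (Z := Z) ((b - a + 1).factorial : ℚ)⁻¹
    have hterm : (-(2 * (Real.pi : ℂ) * I)) ^ (b - a) / ((b - a + 1).factorial : ℂ) *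
        (-1 : ℂ) ^ s * ((zsh (k.take a) : ℝ) : ℂ) * ((zsh ((k.drop b).reverse) : ℝ) : ℂ) =
        (-(2 * (Real.pi : ℂ) * I)) ^ (b - a) * ofReal r := by
      simp only [r]
      push_cast
      ring
    have hba : b - a ≠ 0 := by have := h.1; omega
    rw [hterm, re_mul_ofReal, mul_comm]
    exact Submodule.smul_mem _ ⟨r, hr⟩ (re_neg_two_pi_I_pow_mem hpi hba)
  · simp

end ZetaRS

open ZetaRS in
theorem stmt11_general (Z : Subalgebra ℚ ℝ) (hpi : Real.pi ^ 2 ∈ Z)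
    (zsh : List ℕ+ → ℝ) (hz : ∀ k, zsh k ∈ Z) (k : List ℕ+) :
    ∃ c ∈ Z, (zrs zsh k).re
      - ∑ i ∈ Finset.range (k.length + 1),
          (-1 : ℝ) ^ (((k.drop i).map fun x => (x : ℕ)).sum) *
            zsh (k.take i) * zsh ((k.drop i).reverse)
      = Real.pi ^ 2 * c := by
  rw [← mem_piSqMultiples_iff, re_zrs_sub_sum_zrsTerm_self]
  exact Submodule.sum_mem _ fun a _ => Submodule.sum_mem _ fun b hb =>
    re_zrsTerm_mem hpi hz (Finset.ne_of_mem_erase hb).symm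

/-- `ζ^{RS}` is a lift of the symmetric multiple zeta value `ζ^S`: the real part of
`ζ^{RS}(𝕜)` is congruent to `∑_{i=0}^d (-1)^{k_{i+1}+⋯+k_d} ζ_⧢(k₁,…,k_i)ζ_⧢(k_d,…,k_{i+1})`
modulo `π²𝒵`.  Here `𝒵` is the `ℚ`-algebra of multiple zeta values, abstracted as a
`ℚ`-subalgebra of `ℝ` containing `π²` and all the regularized values `zsh`. -/
theorem stmt11 (Z : Subalgebra ℚ ℝ) (hpi : Real.pi ^ 2 ∈ Z)
    (zsh : List ℕ+ → ℝ) (hone : zsh [] = 1) (hz : ∀ k, zsh k ∈ Z) (k : List ℕ+) :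
    ∃ c ∈ Z, (zrs zsh k).re
      - ∑ i ∈ Finset.range (k.length + 1),
          (-1 : ℝ) ^ (((k.drop i).map fun x => (x : ℕ)).sum) *
            zsh (k.take i) * zsh ((k.drop i).reverse)
      = Real.pi ^ 2 * c :=
  stmt11_general Z hpi zsh hz k
end

section
/- Let $R = \mathbb{C}\langle\langle X_0,X_1\rangle\rangle$ with anti-automorphism $\epsilon(X_a) = -X_a$, let $\Phi_0 \in R$ have constant term $1$, and let $G(X_1) \in \mathbb{C}[[X_1]]$ be an even power series with constant term $1$ (so $\epsilon(G(X_1)) = G(X_1)$ since $G$ is even). Define $\Phi_*(T) = \Phi_0 G(X_1)^{-1}\exp(-TX_1)$ and $\Phi^L(T) = \Phi_0\exp(TX_1)\epsilon(\Phi_0)$. If $G(t)^2 = \frac{\pi t}{\sin(\pi t)}$ as formal power series, then $\Phi_*(T_1) X_1 \epsilon(\Phi_*(T_2)) = \frac{\Phi^L(\pi i - T_1 + T_2) - \Phi^L(-\pi i - T_1 + T_2)}{2\pi i}$, where both sides are formal power series whose coefficients are polynomials in $T_1, T_2$. -/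
/-!
Embed `ℂ⟦X₁⟧` into the noncommutative series by `emb`: it is multiplicative, sends
`exp (T X₁)` to `expX1 T`, and intertwines `ε` with `X₁ ↦ -X₁`. As `G` is even,
`ε (G(X₁)⁻¹) = G(X₁)⁻¹`, so the left side is `Φ₀ M(X₁) ε(Φ₀)` with the commutative series
`M = G⁻² X₁ exp ((T₂ - T₁) X₁)`. Since `G⁻² = sin (π X₁) / (π X₁)`, Euler's formula for the sine
gives `M = (exp ((πi - T₁ + T₂) X₁) - exp ((-πi - T₁ + T₂) X₁)) / (2πi)`, and `Φ₀ F(X₁) ε(Φ₀)`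
is linear in `F`.
-/

open Complex

/-- Noncommutative formal power series `ℂ⟨⟨X₀,X₁⟩⟩`, encoded by their word coefficients. -/
def R := List (Fin 2) → ℂ

/-- The product of noncommutative power series (convolution over splittings of a word). -/
noncomputable def mulR (f g : R) : R :=
  fun w => ∑ i ∈ Finset.range (w.length + 1), f (w.take i) * g (w.drop i)

/-- The continuous anti-automorphism `ε` with `ε(X_a) = -X_a`. -/
def epsR (f : R) : R := fun w => (-1 : ℂ) ^ w.length * f w.reverse

/-- The series `X₁`. -/
def X1el : R := fun w => if w = [1] then 1 else 0

/-- The series `exp(T X₁) = ∑ Tⁿ X₁ⁿ/n!`. -/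
noncomputable def expX1 (T : ℂ) : R :=
  fun w => if w = List.replicate w.length 1 then T ^ w.length / w.length.factorial else 0

/-- `Φ^L(T) = Φ₀ exp(T X₁) ε(Φ₀)`. -/
noncomputable def PhiL (Phi0 : R) (T : ℂ) : R := mulR (mulR Phi0 (expX1 T)) (epsR Phi0)

/-- `Φ_⧢(T) = Φ₀ exp(-T X₁)`. -/
noncomputable def PhiSh (Phi0 : R) (T : ℂ) : R := mulR Phi0 (expX1 (-T))

/-- Embedding of the commutative power series ring `ℂ[[X₁]]` into `R`. -/
noncomputable def emb (f : PowerSeries ℂ) : R :=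
  fun w => if w = List.replicate w.length 1 then PowerSeries.coeff w.length f else 0

open PowerSeries

namespace PowerSeries

theorem constantCoeff_rescale {A : Type*} [CommSemiring A] (a : A) (φ : A⟦X⟧) :
    constantCoeff (rescale a φ) = constantCoeff φ := by
  rw [← coeff_zero_eq_constantCoeff_apply, coeff_rescale, pow_zero, one_mul,
    coeff_zero_eq_constantCoeff_apply]

theorem rescale_inv {k : Type*} [Field k] (a : k) (φ : k⟦X⟧) :
    rescale a φ⁻¹ = (rescale a φ)⁻¹ := by
  by_cases h : constantCoeff φ = 0
  · have h' : constantCoeff (rescale a φ) = 0 := (constantCoeff_rescale a φ).trans h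
    rw [PowerSeries.inv_eq_zero.2 h, PowerSeries.inv_eq_zero.2 h', map_zero]
  · rw [PowerSeries.eq_inv_iff_mul_eq_one ((constantCoeff_rescale a φ).symm ▸ h), ← map_mul,
      PowerSeries.inv_mul_cancel φ h, map_one]

theorem rescale_neg_one_of_coeff_odd_eq_zero {A : Type*} [CommRing A] {φ : A⟦X⟧}
    (h : ∀ n, Odd n → coeff n φ = 0) : rescale (-1) φ = φ := by
  ext n
  rw [coeff_rescale]
  rcases Nat.even_or_odd n with hn | hn
  · rw [hn.neg_one_pow, one_mul]
  · rw [h n hn, mul_zero]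

/-- The power series of `sin (c t) / (c t)`. -/
noncomputable def sincSeries (c : ℂ) : ℂ⟦X⟧ :=
  mk fun n => if Even n then (-1 : ℂ) ^ (n / 2) * c ^ n / (n + 1).factorial else 0

theorem coeff_exp_eq_inv_factorial {K : Type*} [Field K] [CharZero K] (n : ℕ) :
    coeff n (exp K) = (n.factorial : K)⁻¹ := by
  rw [coeff_exp, eq_ratCast]
  push_cast
  rw [one_div]

theorem smul_sincSeries_mul_X (c : ℂ) :
    (2 * c * I) • (sincSeries c * X) = rescale (c * I) (exp ℂ) - rescale (-(c * I)) (exp ℂ) := by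
  ext n
  rcases n with _ | n
  · simp [constantCoeff_rescale]
  rw [coeff_smul, coeff_succ_mul_X, sincSeries, coeff_mk, map_sub, coeff_rescale, coeff_rescale,
    coeff_exp_eq_inv_factorial]
  rcases Nat.even_or_odd n with ⟨k, rfl⟩ | hn
  · rw [if_pos (Even.add_self k), (Even.add_self k).add_one.neg_pow, ← two_mul,
      Nat.mul_div_cancel_left k two_pos, smul_eq_mul, mul_pow, pow_succ I, pow_mul I, I_sq]
    ring
  · rw [if_neg (Nat.not_even_iff_odd.2 hn), hn.add_one.neg_pow]
    simp

theorem inv_mul_exp_mul_X_mul_exp_mul_inv {G : ℂ⟦X⟧} {c : ℂ} (hc : c ≠ 0)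
    (hG : G ^ 2 * sincSeries c = 1) (s t : ℂ) :
    G⁻¹ * rescale s (exp ℂ) * X * (rescale t (exp ℂ) * G⁻¹)
      = (2 * c * I)⁻¹ •
          (rescale (c * I + (s + t)) (exp ℂ) - rescale (-(c * I) + (s + t)) (exp ℂ)) := by
  have hunit : constantCoeff (G ^ 2) ≠ 0 :=
    left_ne_zero_of_mul_eq_one (by rw [← map_mul, hG, map_one])
  have hsinc : sincSeries c = G⁻¹ * G⁻¹ := by
    rw [← PowerSeries.mul_inv_rev, ← sq, PowerSeries.eq_inv_iff_mul_eq_one hunit, mul_comm, hG]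
  have h2cI : (2 * c * I) ≠ 0 := by simp [hc]
  calc G⁻¹ * rescale s (exp ℂ) * X * (rescale t (exp ℂ) * G⁻¹)
      = (2 * c * I)⁻¹ • ((2 * c * I) • (sincSeries c * X)) * rescale (s + t) (exp ℂ) := by
        rw [smul_smul, inv_mul_cancel₀ h2cI, one_smul, hsinc, ← exp_mul_exp_eq_exp_add]
        ring
    _ = _ := by
        rw [smul_sincSeries_mul_X, smul_mul_assoc, sub_mul, exp_mul_exp_eq_exp_add,
          exp_mul_exp_eq_exp_add]

end PowerSeries

theorem mulR_assoc (f g h : R) : mulR (mulR f g) h = mulR f (mulR g h) := by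
  funext w
  -- both sides are the sum over cut points `j ≤ i` of `f (w[0,j)) * g (w[j,i)) * h (w[i,n))`
  have hleft : ∀ i ∈ Finset.range (w.length + 1), mulR f g (w.take i) * h (w.drop i)
      = ∑ j ∈ Finset.range (i + 1), f (w.take j) * g ((w.drop j).take (i - j)) * h (w.drop i) := by
    intro i hi
    have hi : i ≤ w.length := Nat.lt_succ_iff.1 (Finset.mem_range.1 hi)
    rw [mulR, List.length_take_of_le hi, Finset.sum_mul]
    refine Finset.sum_congr rfl fun j hj => ?_
    rw [List.take_take, List.drop_take, min_eq_left (Nat.lt_succ_iff.1 (Finset.mem_range.1 hj))]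
  have hright : ∀ j ∈ Finset.range (w.length + 1), f (w.take j) * mulR g h (w.drop j)
      = ∑ i ∈ Finset.Ico j (w.length + 1),
          f (w.take j) * g ((w.drop j).take (i - j)) * h (w.drop i) := by
    intro j hj
    have hj : j ≤ w.length := Nat.lt_succ_iff.1 (Finset.mem_range.1 hj)
    rw [mulR, List.length_drop, Finset.mul_sum, Finset.sum_Ico_eq_sum_range, Nat.sub_add_comm hj]
    refine Finset.sum_congr rfl fun k _ => ?_
    rw [List.drop_drop, Nat.add_sub_cancel_left, mul_assoc]
  show ∑ i ∈ _, mulR f g (w.take i) * h (w.drop i) = ∑ j ∈ _, f (w.take j) * mulR g h (w.drop j)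
  rw [Finset.sum_congr rfl hleft, Finset.sum_congr rfl hright]
  exact Finset.sum_comm' fun i j => by simp only [Finset.mem_range, Finset.mem_Ico]; omega

theorem epsR_mulR (f g : R) : epsR (mulR f g) = mulR (epsR g) (epsR f) := by
  funext w
  simp only [epsR, mulR, Finset.mul_sum, List.length_reverse, List.length_take, List.length_drop]
  rw [← Finset.sum_range_reflect]
  refine Finset.sum_congr rfl fun i hi => ?_
  have hi : i ≤ w.length := Nat.lt_succ_iff.1 (Finset.mem_range.1 hi)
  rw [Nat.add_sub_cancel, List.reverse_take, List.reverse_drop, min_eq_left hi]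
  have hsign : (-1 : ℂ) ^ w.length = (-1) ^ i * (-1) ^ (w.length - i) := by
    rw [← pow_add, Nat.add_sub_cancel' hi]
  rw [hsign]
  ring

theorem emb_mul (f g : ℂ⟦X⟧) : emb (f * g) = mulR (emb f) (emb g) := by
  funext w
  simp only [emb, mulR]
  by_cases hw : w = List.replicate w.length 1
  · rw [if_pos hw, coeff_mul, Finset.Nat.sum_antidiagonal_eq_sum_range_succ_mk]
    refine Finset.sum_congr rfl fun i hi => ?_
    have hi : i ≤ w.length := Nat.lt_succ_iff.1 (Finset.mem_range.1 hi)
    rw [hw]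
    simp [List.take_replicate, List.drop_replicate, hi]
  · rw [if_neg hw]
    refine (Finset.sum_eq_zero fun i _ => ?_).symm
    rw [List.eq_replicate_length, ← List.take_append_drop i w, List.forall_mem_append] at hw
    split_ifs with h1 h2
    · exact absurd ⟨List.eq_replicate_length.1 h1, List.eq_replicate_length.1 h2⟩ hw
    all_goals simp

theorem emb_X : emb X = X1el := by
  funext w
  simp only [X1el, emb, coeff_X]
  by_cases h : w = [1]
  · simp [h]
  · rw [if_neg h]
    split_ifs with hrep hlen
    · exact absurd (hrep.trans (by rw [hlen]; rfl)) h
    all_goals rfl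

theorem emb_rescale_exp (T : ℂ) : emb (rescale T (exp ℂ)) = expX1 T := by
  funext w
  simp only [expX1, emb, coeff_rescale, coeff_exp_eq_inv_factorial, div_eq_mul_inv]

theorem epsR_emb (f : ℂ⟦X⟧) : epsR (emb f) = emb (rescale (-1) f) := by
  funext w
  have hrev : w.reverse = List.replicate w.length 1 ↔ w = List.replicate w.length 1 := by
    rw [← List.reverse_replicate, List.reverse_inj, List.reverse_replicate]
  simp only [epsR, emb, coeff_rescale, List.length_reverse, hrev]
  split_ifs <;> simp

theorem emb_add_apply (f g : ℂ⟦X⟧) (w : List (Fin 2)) : emb (f + g) w = emb f w + emb g w := by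
  simp only [emb, map_add]
  split_ifs <;> simp

theorem emb_smul_apply (c : ℂ) (f : ℂ⟦X⟧) (w : List (Fin 2)) : emb (c • f) w = c * emb f w := by
  simp only [emb, coeff_smul, smul_eq_mul]
  split_ifs <;> simp

noncomputable def embSandwich (a b : R) (w : List (Fin 2)) : ℂ⟦X⟧ →ₗ[ℂ] ℂ where
  toFun F := mulR (mulR a (emb F)) b w
  map_add' F G := by
    simp only [mulR, emb_add_apply, mul_add, add_mul, Finset.sum_add_distrib]
  map_smul' c F := by
    simp only [mulR, emb_smul_apply, Finset.mul_sum, Finset.sum_mul, RingHom.id_apply, smul_eq_mul]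
    exact Finset.sum_congr rfl fun _ _ => Finset.sum_congr rfl fun _ _ => by ring

theorem stmt14_general (Phi0 : R) (G : PowerSeries ℂ)
    (heven : ∀ n : ℕ, Odd n → PowerSeries.coeff n G = 0)
    (hG2 : G ^ 2 * PowerSeries.mk (fun n =>
      if Even n then (-1 : ℂ) ^ (n / 2) * (Real.pi : ℂ) ^ n / (n + 1).factorial else 0) = 1)
    (T1 T2 : ℂ) (w : List (Fin 2)) :
    mulR (mulR (mulR (mulR Phi0 (emb G⁻¹)) (expX1 (-T1))) X1el)
        (epsR (mulR (mulR Phi0 (emb G⁻¹)) (expX1 (-T2)))) w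
      = (PhiL Phi0 ((Real.pi : ℂ) * I - T1 + T2) w
          - PhiL Phi0 (-(Real.pi : ℂ) * I - T1 + T2) w) / (2 * (Real.pi : ℂ) * I) := by
  have hGinv : rescale (-1) G⁻¹ = G⁻¹ := by
    rw [rescale_inv, rescale_neg_one_of_coeff_odd_eq_zero heven]
  have hexp : rescale (-1) (rescale (-T2) (exp ℂ)) = rescale T2 (exp ℂ) := by
    rw [rescale_rescale, neg_mul_neg, mul_one]
  have hlhs : mulR (mulR (mulR (mulR Phi0 (emb G⁻¹)) (expX1 (-T1))) X1el)
        (epsR (mulR (mulR Phi0 (emb G⁻¹)) (expX1 (-T2))))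
      = mulR (mulR Phi0 (emb (G⁻¹ * rescale (-T1) (exp ℂ) * X * (rescale T2 (exp ℂ) * G⁻¹))))
          (epsR Phi0) := by
    rw [← emb_rescale_exp, ← emb_rescale_exp, ← emb_X, epsR_mulR, epsR_mulR, epsR_emb, epsR_emb,
      hexp, hGinv]
    simp only [emb_mul, mulR_assoc]
  have hphiL (T : ℂ) : PhiL Phi0 T w = embSandwich Phi0 (epsR Phi0) w (rescale T (exp ℂ)) := by
    rw [PhiL, ← emb_rescale_exp]; rfl
  rw [hlhs, inv_mul_exp_mul_X_mul_exp_mul_inv (ofReal_ne_zero.2 Real.pi_ne_zero) hG2, hphiL, hphiL]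
  change embSandwich Phi0 (epsR Phi0) w _ = _
  rw [map_smul, map_sub, smul_eq_mul, inv_mul_eq_div]
  simp only [neg_mul, sub_eq_add_neg, add_assoc]

/-- If `G(t)² = πt/sin(πt)`, with `G` even with constant term 1, and
`Φ_*(T) = Φ₀ G(X₁)⁻¹ exp(-T X₁)`, then
`Φ_*(T₁) X₁ ε(Φ_*(T₂)) = (Φ^L(πi - T₁ + T₂) - Φ^L(-πi - T₁ + T₂))/(2πi)`. -/
theorem stmt14 (Phi0 : R) (h0 : Phi0 [] = 1) (G : PowerSeries ℂ)
    (hconst : PowerSeries.constantCoeff G = 1)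
    (heven : ∀ n : ℕ, Odd n → PowerSeries.coeff n G = 0)
    (hG2 : G ^ 2 * PowerSeries.mk (fun n =>
      if Even n then (-1 : ℂ) ^ (n / 2) * (Real.pi : ℂ) ^ n / (n + 1).factorial else 0) = 1)
    (T1 T2 : ℂ) (w : List (Fin 2)) :
    mulR (mulR (mulR (mulR Phi0 (emb G⁻¹)) (expX1 (-T1))) X1el)
        (epsR (mulR (mulR Phi0 (emb G⁻¹)) (expX1 (-T2)))) w
      = (PhiL Phi0 ((Real.pi : ℂ) * I - T1 + T2) w
          - PhiL Phi0 (-(Real.pi : ℂ) * I - T1 + T2) w) / (2 * (Real.pi : ℂ) * I) :=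
  stmt14_general Phi0 G heven hG2 T1 T2 w
end
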